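/- Let r > 0 and let θ₁, θ₂, θ₃ be angles giving three distinct points pⱼ = (r·e^{iθⱼ}, 0), j = 1, 2, 3, of ℂ × ℝ. If the three pairwise Korányi distances d(p₁,p₂), d(p₂,p₃), d(p₁,p₃) are all equal to 1, then r = 12^(−1/4). -/

import Mathlib

/-!
For points `r e^{iα}`, `r e^{iβ}` of the planar circle, `|z - w|² = 2r²(1 - cos(α - β))` and
`Im (z w̄) = r² sin(α - β)`, so the fourth power of their Korányi distance is
`4r⁴((1 - cos)² + sin²) = 8r⁴(1 - cos(α - β))`. Unit distances therefore force the three angle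
differences `a = θ₁ - θ₂`, `b = θ₂ - θ₃`, `a + b` to share one cosine `c ≠ 1`, and
`cos (a + b) = c² - sin a sin b` then gives `(2c + 1)(c - 1)² = 0`. Hence `c = -1/2`
and `8r⁴ · 3/2 = 1`.
-/

open Complex Real

/-- The Korányi (Heisenberg) distance on ℂ × ℝ. -/
noncomputable def kd (p q : ℂ × ℝ) : ℝ :=
  (‖p.1 - q.1‖ ^ 4 +
    (p.2 - q.2 + 2 * (p.1 * (starRingEnd ℂ) q.1).im) ^ 2) ^ ((1 : ℝ) / 4)

lemma kd_pow_four (p q : ℂ × ℝ) :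
    kd p q ^ 4 = ‖p.1 - q.1‖ ^ 4 + (p.2 - q.2 + 2 * (p.1 * (starRingEnd ℂ) q.1).im) ^ 2 := by
  rw [kd, one_div]
  exact_mod_cast Real.rpow_inv_natCast_pow (by positivity) four_ne_zero

lemma ofReal_mul_exp_mul_conj (r α β : ℝ) :
    (r : ℂ) * exp (α * I) * (starRingEnd ℂ) ((r : ℂ) * exp (β * I)) =
      ((r ^ 2 : ℝ) : ℂ) * exp ((α - β : ℝ) * I) := by
  rw [map_mul, Complex.conj_ofReal, ← Complex.exp_conj, map_mul, Complex.conj_ofReal,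
    Complex.conj_I]
  push_cast
  rw [show (α - β : ℂ) * I = α * I + β * -I by ring, Complex.exp_add]
  ring

lemma kd_planar_circle_pow_four (r α β : ℝ) :
    kd ((r : ℂ) * exp (α * I), 0) ((r : ℂ) * exp (β * I), 0) ^ 4 =
      8 * r ^ 4 * (1 - Real.cos (α - β)) := by
  have hprod := ofReal_mul_exp_mul_conj r α β
  have hre : ((r : ℂ) * exp (α * I) * (starRingEnd ℂ) ((r : ℂ) * exp (β * I))).re =
      r ^ 2 * Real.cos (α - β) := by
    rw [hprod, Complex.re_ofReal_mul, Complex.exp_ofReal_mul_I_re]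
  have him : ((r : ℂ) * exp (α * I) * (starRingEnd ℂ) ((r : ℂ) * exp (β * I))).im =
      r ^ 2 * Real.sin (α - β) := by
    rw [hprod, Complex.im_ofReal_mul, Complex.exp_ofReal_mul_I_im]
  have hnormSq : ∀ θ : ℝ, normSq ((r : ℂ) * exp (θ * I)) = r ^ 2 := fun θ => by
    rw [Complex.normSq_mul, Complex.normSq_ofReal, Complex.normSq_eq_norm_sq,
      Complex.norm_exp_ofReal_mul_I]
    ring
  have hchord : ‖(r : ℂ) * exp (α * I) - r * exp (β * I)‖ ^ 2 =
      2 * r ^ 2 * (1 - Real.cos (α - β)) := by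
    rw [← Complex.normSq_eq_norm_sq, Complex.normSq_sub, hnormSq, hnormSq, hre]
    ring
  rw [kd_pow_four]
  dsimp only
  rw [him, show ∀ x : ℝ, x ^ 4 = (x ^ 2) ^ 2 from fun x => by ring, hchord]
  linear_combination (4 * r ^ 4) * Real.sin_sq_add_cos_sq (α - β)

lemma exp_mul_I_eq_of_cos_sub_eq_one {α β : ℝ} (h : Real.cos (α - β) = 1) :
    exp (α * I) = exp (β * I) := by
  obtain ⟨n, hn⟩ := (Real.cos_eq_one_iff _).1 h
  refine Complex.exp_eq_exp_iff_exists_int.2 ⟨n, ?_⟩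
  rw [show (α : ℂ) = β + ((n * (2 * π) : ℝ) : ℂ) by rw [hn]; push_cast; ring]
  push_cast
  ring

lemma cos_eq_neg_half_of_cos_eq_of_cos_add_eq {a b : ℝ} (hb : Real.cos b = Real.cos a)
    (hab : Real.cos (a + b) = Real.cos a) (ha : Real.cos a ≠ 1) : Real.cos a = -1 / 2 := by
  have hsa := Real.sin_sq_add_cos_sq a
  have hsb := Real.sin_sq_add_cos_sq b
  rw [hb] at hsb
  rw [Real.cos_add, hb] at hab
  have hfac : (2 * Real.cos a + 1) * (Real.cos a - 1) ^ 2 = 0 := by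
    linear_combination -(Real.sin a * Real.sin b + Real.cos a ^ 2 - Real.cos a) * hab
      - (1 - Real.cos a ^ 2) * hsa - Real.sin a ^ 2 * hsb
  have hne : (Real.cos a - 1) ^ 2 ≠ 0 := pow_ne_zero 2 (sub_ne_zero.2 ha)
  linarith [(mul_eq_zero.1 hfac).resolve_right hne]

theorem equilateral_triple_on_planar_circle_radius_general (r : ℝ) (hr : 0 < r)
    (θ₁ θ₂ θ₃ : ℝ)
    (p₁ p₂ p₃ : ℂ × ℝ)
    (hp₁ : p₁ = ((r : ℂ) * Complex.exp (θ₁ * Complex.I), 0))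
    (hp₂ : p₂ = ((r : ℂ) * Complex.exp (θ₂ * Complex.I), 0))
    (hp₃ : p₃ = ((r : ℂ) * Complex.exp (θ₃ * Complex.I), 0))
    (hne₁₂ : p₁ ≠ p₂)
    (hd₁₂ : kd p₁ p₂ = 1) (hd₂₃ : kd p₂ p₃ = 1) (hd₁₃ : kd p₁ p₃ = 1) :
    r = (12 : ℝ) ^ (-(1 : ℝ) / 4) := by
  subst hp₁ hp₂ hp₃
  have hunit : ∀ {α β : ℝ}, kd ((r : ℂ) * exp (α * I), 0) ((r : ℂ) * exp (β * I), 0) = 1 →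
      8 * r ^ 4 * (1 - Real.cos (α - β)) = 1 := fun h => by
    rw [← kd_planar_circle_pow_four, h, one_pow]
  have h₁₂ := hunit hd₁₂
  have h₂₃ := hunit hd₂₃
  have h₁₃ := hunit hd₁₃
  have hr4 : 8 * r ^ 4 ≠ 0 := by positivity
  have hcos : Real.cos (θ₁ - θ₂) = -1 / 2 := by
    refine cos_eq_neg_half_of_cos_eq_of_cos_add_eq (b := θ₂ - θ₃) ?_ ?_ ?_
    · exact sub_right_inj.1 (mul_left_cancel₀ hr4 (h₂₃.trans h₁₂.symm))
    · rw [sub_add_sub_cancel]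
      exact sub_right_inj.1 (mul_left_cancel₀ hr4 (h₁₃.trans h₁₂.symm))
    · exact fun h => hne₁₂ (by rw [exp_mul_I_eq_of_cos_sub_eq_one h])
  have hr12 : r ^ 4 = 12⁻¹ := by rw [hcos] at h₁₂; linarith
  rw [← Real.pow_rpow_inv_natCast hr.le four_ne_zero, hr12, Real.inv_rpow (by norm_num),
    ← Real.rpow_neg (by norm_num)]
  norm_num

theorem equilateral_triple_on_planar_circle_radius (r : ℝ) (hr : 0 < r)
    (θ₁ θ₂ θ₃ : ℝ)
    (p₁ p₂ p₃ : ℂ × ℝ)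
    (hp₁ : p₁ = ((r : ℂ) * Complex.exp (θ₁ * Complex.I), 0))
    (hp₂ : p₂ = ((r : ℂ) * Complex.exp (θ₂ * Complex.I), 0))
    (hp₃ : p₃ = ((r : ℂ) * Complex.exp (θ₃ * Complex.I), 0))
    (hne₁₂ : p₁ ≠ p₂) (hne₁₃ : p₁ ≠ p₃) (hne₂₃ : p₂ ≠ p₃)
    (hd₁₂ : kd p₁ p₂ = 1) (hd₂₃ : kd p₂ p₃ = 1) (hd₁₃ : kd p₁ p₃ = 1) :
    r = (12 : ℝ) ^ (-(1 : ℝ) / 4) :=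
  equilateral_triple_on_planar_circle_radius_general r hr θ₁ θ₂ θ₃ p₁ p₂ p₃ hp₁ hp₂ hp₃ hne₁₂ hd₁₂
    hd₂₃ hd₁₃
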